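/- Let A ∈ ℝ^{m×n}, let U-space ⊆ ℝ^m be a subspace of dimension s₁ and V-space ⊆ ℝ^n a subspace of dimension s₂, and let S_u ⊆ U-space, S_v ⊆ V-space be subspaces with dim(S_u) + dim(S_v) > max(s₁, s₂). Suppose the maximum of the Rayleigh quotient ρ(z) = 2 uᵀ A v / (‖u‖² + ‖v‖²) over all nonzero z = (u; v) with u ∈ S_u, v ∈ S_v equals zero. Then there exists a maximizer z* = (u*; v*) with u* ∈ S_u, v* ∈ S_v, ‖u*‖ = ‖v*‖ = 1, and ρ(z*) = 0 (equivalently, u*ᵀ A v* = 0). -/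

import Mathlib

/-!
The bilinear form `(u, v) ↦ uᵀ A v` changes sign under `u ↦ -u` while the denominator
`‖u‖² + ‖v‖²` does not, so a Rayleigh quotient that is nowhere positive on `S_u × S_v` makes the
form vanish identically there. The dimension count forces both `S_u` and `S_v` to be nonzero,
and any pair of unit vectors from them is then a maximizer.
-/

lemma Submodule.exists_mem_norm_eq_one_of_finrank_pos {E : Type*} [NormedAddCommGroup E]
    [NormedSpace ℝ E] (S : Submodule ℝ E) (hS : 0 < Module.finrank ℝ S) :
    ∃ x ∈ S, ‖x‖ = 1 := by
  have : Nontrivial S := Module.nontrivial_of_finrank_pos hS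
  obtain ⟨x, hx⟩ := exists_norm_eq S zero_le_one
  exact ⟨x, x.2, hx⟩

section

variable {ι κ : Type*} [Fintype ι] [Fintype κ]

noncomputable def rayleighQuotient (A : Matrix ι κ ℝ)
    (u : EuclideanSpace ℝ ι) (v : EuclideanSpace ℝ κ) : ℝ :=
  2 * (u ⬝ᵥ A.mulVec v) / (‖u‖ ^ 2 + ‖v‖ ^ 2)

lemma rayleighQuotient_nonpos_iff (A : Matrix ι κ ℝ) {u : EuclideanSpace ℝ ι}
    {v : EuclideanSpace ℝ κ} (huv : (u, v) ≠ 0) :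
    rayleighQuotient A u v ≤ 0 ↔ u ⬝ᵥ A.mulVec v ≤ 0 := by
  have hden : 0 < ‖u‖ ^ 2 + ‖v‖ ^ 2 := by
    rcases not_and_or.mp (mt Prod.mk_eq_zero.mpr huv) with hu | hv
    · have := norm_pos_iff.mpr hu; positivity
    · have := norm_pos_iff.mpr hv; positivity
  rw [rayleighQuotient, div_le_iff₀ hden, zero_mul]
  constructor <;> intro h <;> linarith

lemma dotProduct_mulVec_eq_zero_of_rayleighQuotient_nonpos (A : Matrix ι κ ℝ)
    {Su : Submodule ℝ (EuclideanSpace ℝ ι)} {Sv : Submodule ℝ (EuclideanSpace ℝ κ)}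
    (hle : ∀ u ∈ Su, ∀ v ∈ Sv, (u, v) ≠ 0 → rayleighQuotient A u v ≤ 0)
    {u : EuclideanSpace ℝ ι} (hu : u ∈ Su) {v : EuclideanSpace ℝ κ} (hv : v ∈ Sv) :
    u ⬝ᵥ A.mulVec v = 0 := by
  by_cases huv : (u, v) = 0
  · simp [(Prod.mk_eq_zero.mp huv).1]
  have hneg : (-u, v) ≠ 0 := by simpa using huv
  have h₁ := (rayleighQuotient_nonpos_iff A huv).mp (hle u hu v hv huv)
  have h₂ := (rayleighQuotient_nonpos_iff A hneg).mp (hle (-u) (Su.neg_mem hu) v hv hneg)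
  rw [WithLp.ofLp_neg, neg_dotProduct, neg_nonpos] at h₂
  exact le_antisymm h₁ h₂

end

/-- If `S_u ⊆ U`-space (dimension `s₁`), `S_v ⊆ V`-space (dimension `s₂`),
`dim S_u + dim S_v > max s₁ s₂`, and the maximum of the Rayleigh quotient
`ρ(z) = 2 uᵀ A v / (‖u‖² + ‖v‖²)` over nonzero `z = (u; v) ∈ S_u × S_v` equals zero,
then there is a maximizer with `‖u*‖ = ‖v*‖ = 1` and `u*ᵀ A v* = 0`. -/
theorem rayleigh_quotient_zero_max_unit_maximizer {m n s₁ s₂ : ℕ}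
    (A : Matrix (Fin m) (Fin n) ℝ)
    (Uspace : Submodule ℝ (EuclideanSpace ℝ (Fin m)))
    (Vspace : Submodule ℝ (EuclideanSpace ℝ (Fin n)))
    (hUdim : Module.finrank ℝ Uspace = s₁) (hVdim : Module.finrank ℝ Vspace = s₂)
    (Su : Submodule ℝ (EuclideanSpace ℝ (Fin m)))
    (Sv : Submodule ℝ (EuclideanSpace ℝ (Fin n)))
    (hSu : Su ≤ Uspace) (hSv : Sv ≤ Vspace)
    (hdim : max s₁ s₂ < Module.finrank ℝ Su + Module.finrank ℝ Sv)
    (hmax : IsGreatest {r : ℝ | ∃ u ∈ Su, ∃ v ∈ Sv, (u, v) ≠ 0 ∧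
      r = 2 * (u ⬝ᵥ A.mulVec v) / (‖u‖ ^ 2 + ‖v‖ ^ 2)} 0) :
    ∃ u ∈ Su, ∃ v ∈ Sv, ‖u‖ = 1 ∧ ‖v‖ = 1 ∧ u ⬝ᵥ A.mulVec v = 0 := by
  have hSu_le : Module.finrank ℝ Su ≤ s₁ := hUdim ▸ Submodule.finrank_mono hSu
  have hSv_le : Module.finrank ℝ Sv ≤ s₂ := hVdim ▸ Submodule.finrank_mono hSv
  obtain ⟨u, hu, hu_norm⟩ := Su.exists_mem_norm_eq_one_of_finrank_pos (by omega)
  obtain ⟨v, hv, hv_norm⟩ := Sv.exists_mem_norm_eq_one_of_finrank_pos (by omega)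
  have hle : ∀ u ∈ Su, ∀ v ∈ Sv, (u, v) ≠ 0 → rayleighQuotient A u v ≤ 0 :=
    fun u hu v hv huv => hmax.2 ⟨u, hu, v, hv, huv, rfl⟩
  exact ⟨u, hu, v, hv, hu_norm, hv_norm,
    dotProduct_mulVec_eq_zero_of_rayleighQuotient_nonpos A hle hu hv⟩
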